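/- arXiv:2207.09267 — 8 statements merged into one kernel-verified Lean document; each statement's English description precedes it below -/
import Mathlib

section
/- Parallelization lemma (Lemma 1): Let n ≥ 1, let the index type of bit strings be α = (Fin n → Bool), and let x : α be a bit string. Let P be the permutation matrix over ℂ indexed by α of the involution u ↦ u XOR x (pointwise exclusive or with x). For any unitary matrices G_<, G_> indexed by α, set G_A := P · G_<ᵀ and G_B := P · G_>. Then for every bit string z : α and every y : α, the ((z, y)) entry of the vector (G_A ⊗ G_B)·ω equals the y entry of the vector (P · G_> · G_< · P)·e_z; in particular, taking z to be the all-false string 0ⁿ, ⟨z| on the first factor of (G_A ⊗ G_B)|Φ⟩^{⊗n} recovers X^x G_> G_< X^x |0⟩^{⊗n}. -/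
open Matrix Kronecker

/-- The (unnormalized) maximally entangled vector `|Φ⟩^{⊗n}` on `n` qubit
pairs, indexed by pairs of bit strings. -/
noncomputable def entPairs (n : ℕ) : (Fin n → Bool) × (Fin n → Bool) → ℂ :=
  fun p => if p.1 = p.2 then 1 else 0

/-- The permutation matrix `X^x` of the involution `u ↦ u XOR x`
(pointwise exclusive or with the bit string `x`). -/
noncomputable def xorMatrix {n : ℕ} (x : Fin n → Bool) :
    Matrix (Fin n → Bool) (Fin n → Bool) ℂ :=
  Matrix.of fun u v => if v = fun i => xor (u i) (x i) then 1 else 0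

lemma xor_swap {n : ℕ} (x v w : Fin n → Bool) :
    (v = fun i => xor (w i) (x i)) ↔ (w = fun i => xor (v i) (x i)) := by
  constructor <;> (rintro rfl; funext i; simp [Bool.xor_assoc])

lemma xorMul {n : ℕ} (x : Fin n → Bool) (M : Matrix (Fin n → Bool) (Fin n → Bool) ℂ)
    (u v : Fin n → Bool) :
    (xorMatrix x * M) u v = M (fun i => xor (u i) (x i)) v := by
  simp [Matrix.mul_apply, xorMatrix, ite_mul]

lemma mulXor {n : ℕ} (x : Fin n → Bool) (M : Matrix (Fin n → Bool) (Fin n → Bool) ℂ)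
    (u v : Fin n → Bool) :
    (M * xorMatrix x) u v = M u (fun i => xor (v i) (x i)) := by
  rw [Matrix.mul_apply]
  have : ∀ w, M u w * (xorMatrix x) w v
      = M u w * (if w = fun i => xor (v i) (x i) then 1 else 0) := by
    intro w
    simp only [xorMatrix, Matrix.of_apply]
    rw [if_congr (xor_swap x v w) rfl rfl]
  simp [this, mul_ite]

/-- **Parallelization lemma (Lemma 1)**: for unitary `G_<`, `G_>` and
`G_A := X^x G_<ᵀ`, `G_B := X^x G_>`, the `(z, y)` entry of
`(G_A ⊗ B)·ω` equals the `y` entry of `(X^x G_> G_< X^x)·e_z`. -/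
theorem parallelization_lemma (n : ℕ) (hn : 1 ≤ n) (x : Fin n → Bool)
    (Glt Ggt : Matrix (Fin n → Bool) (Fin n → Bool) ℂ)
    (hlt1 : Glt * Gltᴴ = 1) (hlt2 : Gltᴴ * Glt = 1)
    (hgt1 : Ggt * Ggtᴴ = 1) (hgt2 : Ggtᴴ * Ggt = 1)
    (z y : Fin n → Bool) :
    ((xorMatrix x * Gltᵀ) ⊗ₖ (xorMatrix x * Ggt)).mulVec (entPairs n) (z, y)
      = (xorMatrix x * Ggt * Glt * xorMatrix x).mulVec (Pi.single z 1) y := by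
  classical
  have hR : (xorMatrix x * Ggt * Glt * xorMatrix x).mulVec (Pi.single z 1) y
      = (xorMatrix x * Ggt * Glt * xorMatrix x) y z := by
    simp [Matrix.mulVec_single]
  rw [hR, mulXor, mul_assoc, xorMul, Matrix.mul_apply]
  rw [Matrix.mulVec, dotProduct]
  rw [Fintype.sum_prod_type]
  simp only [Matrix.kroneckerMap_apply, entPairs, mul_ite, mul_one, mul_zero,
    Finset.sum_ite_eq', Finset.sum_ite_eq, Finset.mem_univ, if_true]
  refine Finset.sum_congr rfl fun u _ => ?_
  simp [xorMul, mul_comm]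
end

section
/- Blind delegation identity (Eq. 24): Let n ≥ 1, α = (Fin n → Bool), and let x : α be a bit string with associated XOR-permutation matrix P (the matrix of u ↦ u XOR x). Let G_<, G_> be matrices over ℂ indexed by α and set G := G_> · G_<. If P · G · P = G, then for every y : α, the ((x, y)) entry of the vector ((G_<ᵀ) ⊗ (P · G_>))·ω equals the y entry of G·e_{0ⁿ}, where 0ⁿ is the all-false bit string. That is, measuring the first half of (G_<ᵀ ⊗ X^x G_>)|Φ⟩^{⊗n} in outcome x leaves the second half in the state G|0⟩^{⊗n}. -/
open Matrix Kronecker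

lemma xorMatrix_invol {n : ℕ} (x : Fin n → Bool) :
    xorMatrix x * xorMatrix x = 1 := by
  ext u w
  simp only [xorMatrix, Matrix.mul_apply, Matrix.of_apply, Matrix.one_apply]
  rw [Finset.sum_eq_single (fun i => xor (u i) (x i))]
  · have h : (fun i => xor (xor (u i) (x i)) (x i)) = u := by
      funext i; simp [Bool.xor_assoc]
    rw [if_pos rfl, one_mul, h]
    simp [eq_comm]
  · intro v _ hv; rw [if_neg hv, zero_mul]
  · simp

/-- **Blind delegation identity (Eq. 24)**: if `X^x G X^x = G` for
`G = G_> G_<`, then measuring the first half of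
`(G_<ᵀ ⊗ X^x G_>)|Φ⟩^{⊗n}` in outcome `x` leaves the second half in the
state `G|0⟩^{⊗n}`: the `(x, y)` entry of `(G_<ᵀ ⊗ (X^x G_>))·ω` equals
the `y` entry of `G·e_{0ⁿ}`. -/
theorem blind_delegation (n : ℕ) (hn : 1 ≤ n) (x : Fin n → Bool)
    (Glt Ggt : Matrix (Fin n → Bool) (Fin n → Bool) ℂ)
    (hG : xorMatrix x * (Ggt * Glt) * xorMatrix x = Ggt * Glt)
    (y : Fin n → Bool) :
    (Gltᵀ ⊗ₖ (xorMatrix x * Ggt)).mulVec (entPairs n) (x, y)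
      = (Ggt * Glt).mulVec (Pi.single (fun _ => false) 1) y := by
  classical
  have hcomm : xorMatrix x * (Ggt * Glt) = (Ggt * Glt) * xorMatrix x := by
    calc xorMatrix x * (Ggt * Glt)
        = xorMatrix x * (Ggt * Glt) * (xorMatrix x * xorMatrix x) := by
          rw [xorMatrix_invol, mul_one]
      _ = (xorMatrix x * (Ggt * Glt) * xorMatrix x) * xorMatrix x := by
          simp only [mul_assoc]
      _ = (Ggt * Glt) * xorMatrix x := by rw [hG]
  have hL : (Gltᵀ ⊗ₖ (xorMatrix x * Ggt)).mulVec (entPairs n) (x, y)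
      = (xorMatrix x * (Ggt * Glt)) y x := by
    simp only [Matrix.mulVec, dotProduct, entPairs]
    rw [Fintype.sum_prod_type]
    have key : ∀ u : Fin n → Bool,
        ∑ v : Fin n → Bool, (Gltᵀ ⊗ₖ (xorMatrix x * Ggt)) (x, y) (u, v)
          * (if u = v then (1:ℂ) else 0)
        = Glt u x * (xorMatrix x * Ggt) y u := by
      intro u
      rw [Finset.sum_eq_single u]
      · simp [Matrix.kroneckerMap_apply, Matrix.transpose_apply]
      · intro v _ hv; rw [if_neg (Ne.symm hv), mul_zero]
      · simp
    simp only [key]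
    rw [show xorMatrix x * (Ggt * Glt) = (xorMatrix x * Ggt) * Glt from by
      rw [mul_assoc], Matrix.mul_apply]
    exact Finset.sum_congr rfl (fun u _ => mul_comm _ _)
  have hR : (Ggt * Glt).mulVec (Pi.single (fun _ => false) 1) y
      = (Ggt * Glt) y (fun _ => false) := by
    simp only [Matrix.mulVec, dotProduct, Pi.single_apply]
    rw [Finset.sum_eq_single (fun _ : Fin n => false)]
    · simp
    · intro v _ hv; rw [if_neg hv, mul_zero]
    · simp
  rw [hL, hR, hcomm, Matrix.mul_apply]
  rw [Finset.sum_eq_single (fun _ : Fin n => false)]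
  · have h1 : (xorMatrix x) (fun _ => false) x = 1 := by
      simp [xorMatrix]
    rw [h1, mul_one]
  · intro v _ hv
    have h0 : (xorMatrix x) v x = 0 := by
      rw [show (xorMatrix x) v x
          = if x = fun i => xor (v i) (x i) then (1:ℂ) else 0 from rfl]
      rw [if_neg]
      intro hc
      apply hv
      funext i
      have hi := congrFun hc i
      clear hc
      revert hi
      cases x i <;> cases v i <;> simp
    rw [h0, mul_zero]
  · simp
end

section
/- Upper bound on the circuit-component count (Appendix B, Eq. 27): for every natural number n, 40320 · s'(n) ≤ 1133233 · n!, i.e. s'(n) ≤ (1133233 / 8!) · n!. -/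
/-!
The recurrence is monotone and homogeneous in `s'`, so a bound `c * s' j ≤ d * j!` for all `j < n`
propagates to `n` once the right-hand side evaluated at the factorials is at most `n!`. That
right-hand side is `5 (n-1)! + ∑ C(n-1,j) (n-j) j!`, and the sum stays below `5 (n-1)!` (its ratio
to `(n-1)!` tends to `2e - 1`), so the whole is at most `10 (n-1)! ≤ n!` for `n ≥ 10`. The cases
`n < 10` are computed; the bound is attained at `n = 8`, since `s' 8 = 1133233`.
-/

/-- `s' n` counts the distinct circuit components over `n` qubits
(ignoring the phase arguments of controlled-rotation gates):
`s' 0 = 1`, `s' 1 = 3`, and for `n ≥ 2`,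
`s' n = 3·s'(n−1) + 2·(n−1)·s'(n−2) + Σ_{j=0}^{n−2} C(n−1,j)·(n−j)·s'(j)`. -/
def s' : ℕ → ℕ
  | 0 => 1
  | 1 => 3
  | n + 2 =>
    3 * s' (n + 1) + 2 * (n + 1) * s' n +
      ∑ j : Fin (n + 1), (n + 1).choose j * (n + 2 - (j : ℕ)) * s' j

open Finset Nat

def recRhs (f : ℕ → ℕ) (m : ℕ) : ℕ :=
  3 * f (m + 1) + 2 * (m + 1) * f m +
    ∑ j : Fin (m + 1), (m + 1).choose j * (m + 2 - (j : ℕ)) * f j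

lemma s'_add_two (m : ℕ) : s' (m + 2) = recRhs s' m := by
  rw [s', recRhs]

lemma recRhs_mono {f g : ℕ → ℕ} {m : ℕ} (h : ∀ j ≤ m + 1, f j ≤ g j) :
    recRhs f m ≤ recRhs g m := by
  unfold recRhs
  gcongr with j
  · exact h _ le_rfl
  · exact h _ (by omega)
  · exact h _ (by omega)

lemma recRhs_const_mul (c : ℕ) (f : ℕ → ℕ) (m : ℕ) :
    recRhs (fun j ↦ c * f j) m = c * recRhs f m := by
  simp only [recRhs, mul_add, mul_sum]
  congr 1
  · ring
  · exact sum_congr rfl fun _ _ ↦ by ring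

def factorialSum (m : ℕ) : ℕ := ∑ j ∈ range (m + 1), (m + 1).choose j * (m + 2 - j) * j !

lemma recRhs_factorial (m : ℕ) : recRhs factorial m = 5 * (m + 1)! + factorialSum m := by
  rw [recRhs, factorialSum, factorial_succ m,
    Fin.sum_univ_eq_sum_range (fun j ↦ (m + 1).choose j * (m + 2 - j) * j !)]
  ring

lemma factorialSum_succ (m : ℕ) : factorialSum (m + 1) = (m + 2) * factorialSum m + (m + 3) := by
  rw [factorialSum, sum_range_succ', factorialSum, mul_sum]
  simp only [choose_zero_right, factorial_zero, Nat.sub_zero, one_mul, mul_one]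
  congr 1
  refine sum_congr rfl fun j hj ↦ ?_
  have hj : j < m + 1 := mem_range.mp hj
  rw [factorial_succ, show m + 1 + 2 - (j + 1) = m + 2 - j by omega]
  calc (m + 2).choose (j + 1) * (m + 2 - j) * ((j + 1) * j !)
      = (m + 2).choose (j + 1) * (j + 1) * ((m + 2 - j) * j !) := by ring
    _ = (m + 2) * ((m + 1).choose j * (m + 2 - j) * j !) := by
      rw [← add_one_mul_choose_eq]; ring

-- The extra `m + 3` is what makes the induction close.
lemma factorialSum_add_le {m : ℕ} (hm : 2 ≤ m) : factorialSum m + (m + 3) ≤ 5 * (m + 1)! := by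
  induction m, hm using le_induction with
  | base => decide
  | succ m hm ih =>
    rw [factorialSum_succ, factorial_succ (m + 1)]
    nlinarith

lemma recRhs_factorial_le {m : ℕ} (hm : 8 ≤ m) : recRhs factorial m ≤ (m + 2)! := by
  have := factorialSum_add_le (by omega : 2 ≤ m)
  rw [recRhs_factorial, factorial_succ (m + 1)]
  nlinarith

/-- **Upper bound on the circuit-component count (Appendix B, Eq. 27)**:
for every `n`, `s'(n) ≤ (1133233 / 8!) · n!`, i.e.
`40320 · s'(n) ≤ 1133233 · n!`. -/
theorem s'_le (n : ℕ) : 40320 * s' n ≤ 1133233 * n.factorial := by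
  induction n using Nat.strong_induction_on with
  | _ n ih =>
    obtain hn | hn := lt_or_ge n 10
    · have small : ∀ n < 10, 40320 * s' n ≤ 1133233 * n ! := by decide +kernel
      exact small n hn
    obtain ⟨m, rfl⟩ : ∃ m, n = m + 2 := ⟨n - 2, by omega⟩
    calc 40320 * s' (m + 2) = recRhs (fun j ↦ 40320 * s' j) m := by
          rw [s'_add_two, recRhs_const_mul]
      _ ≤ recRhs (fun j ↦ 1133233 * j !) m := recRhs_mono fun j hj ↦ ih j (by omega)
      _ = 1133233 * recRhs factorial m := recRhs_const_mul _ _ _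
      _ ≤ 1133233 * (m + 2)! := Nat.mul_le_mul_left _ (recRhs_factorial_le (by omega))
end

section
/- Binomial-factorial sum bound (Appendix B): for every natural number n ≥ 1, the real number Σ_{j=0}^{n−1} C(n−1, j)·(n−j)·j! is strictly less than 2·e·(n−1)!, where e = exp(1). -/
open Finset

lemma sum_inv_factorial_le' (N : ℕ) :
    ∑ k ∈ range N, (1 : ℝ) / k.factorial ≤ Real.exp 1 := by
  have := Real.sum_le_exp_of_nonneg (x := 1) zero_le_one N
  simpa using this

lemma sum_inv_factorial_lt' (N : ℕ) :
    ∑ k ∈ range N, (1 : ℝ) / k.factorial < Real.exp 1 := by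
  refine lt_of_lt_of_le ?_ (sum_inv_factorial_le' (N + 1))
  rw [Finset.sum_range_succ]
  have : (0 : ℝ) < 1 / N.factorial := by positivity
  linarith

lemma key_sum_lt (m : ℕ) :
    ∑ k ∈ range (m + 1), ((k : ℝ) + 1) / k.factorial < 2 * Real.exp 1 := by
  have hsplit : ∑ k ∈ range (m + 1), ((k : ℝ) + 1) / k.factorial
      = (∑ k ∈ range (m + 1), (k : ℝ) / k.factorial)
        + ∑ k ∈ range (m + 1), (1 : ℝ) / k.factorial := by
    rw [← Finset.sum_add_distrib]
    exact Finset.sum_congr rfl fun k _ => by rw [add_div]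
  have hshift : ∑ k ∈ range (m + 1), (k : ℝ) / k.factorial
      = ∑ k ∈ range m, (1 : ℝ) / k.factorial := by
    rw [Finset.sum_range_succ']
    simp only [Nat.cast_zero, Nat.factorial_zero, Nat.cast_one, zero_div, add_zero]
    refine Finset.sum_congr rfl fun k _ => ?_
    rw [Nat.factorial_succ]
    have hk : (k.factorial : ℝ) ≠ 0 := by positivity
    push_cast
    field_simp
  rw [hsplit, hshift]
  have h1 := sum_inv_factorial_lt' m
  have h2 := sum_inv_factorial_lt' (m + 1)
  linarith

/-- **Binomial-factorial sum bound (Appendix B)**: for every `n ≥ 1`,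
`Σ_{j=0}^{n−1} C(n−1, j)·(n−j)·j! < 2·e·(n−1)!` in the real numbers. -/
theorem sum_choose_factorial_lt (n : ℕ) (hn : 1 ≤ n) :
    ((∑ j ∈ Finset.range n, (n - 1).choose j * (n - j) * j.factorial : ℕ) : ℝ)
      < 2 * Real.exp 1 * (n - 1).factorial := by
  obtain ⟨m, rfl⟩ : ∃ m, n = m + 1 := ⟨n - 1, (Nat.succ_pred_eq_of_pos hn).symm⟩
  simp only [Nat.add_sub_cancel]
  have hkey : ((∑ j ∈ Finset.range (m + 1),
      m.choose j * (m + 1 - j) * j.factorial : ℕ) : ℝ)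
      = (m.factorial : ℝ) * ∑ k ∈ range (m + 1), ((k : ℝ) + 1) / k.factorial := by
    rw [Finset.mul_sum, ← Finset.sum_range_reflect]
    push_cast
    refine Finset.sum_congr rfl fun j hj => ?_
    have hj' : j ≤ m := Nat.lt_succ_iff.mp (Finset.mem_range.mp hj)
    have h1 : m + 1 - j = (m - j) + 1 := by omega
    have h2 : m.choose j * j.factorial * (m - j).factorial = m.factorial :=
      Nat.choose_mul_factorial_mul_factorial hj'
    have h3 : ((m - j).factorial : ℝ) ≠ 0 := by positivity
    have h2' : (m.choose j : ℝ) * j.factorial * (m - j).factorial = m.factorial := by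
      exact_mod_cast congrArg (Nat.cast : ℕ → ℝ) h2
    have hsym : m.choose (m - j) = m.choose j := Nat.choose_symm hj'
    have h4 : m + 1 - (m - j) = j + 1 := by omega
    have h5 : (j.factorial : ℝ) ≠ 0 := by positivity
    rw [hsym, h4]
    push_cast
    field_simp
    nlinarith [h2']
  rw [hkey]
  have hpos : (0 : ℝ) < m.factorial := by positivity
  calc (m.factorial : ℝ) * ∑ k ∈ range (m + 1), ((k : ℝ) + 1) / k.factorial
      < (m.factorial : ℝ) * (2 * Real.exp 1) := by
        exact (mul_lt_mul_iff_right₀ hpos).mpr (key_sum_lt m)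
    _ = 2 * Real.exp 1 * m.factorial := by ring
end

section
/- Inductive step of the circuit-count bound (Appendix B): let n ≥ 2 and suppose that 40320 · s'(j) ≤ 1133233 · j! holds for every j < n. Then 40320 · s'(n) ≤ 1133233 · ( 7·(n−1)! + Σ_{j=0}^{n−3} C(n−1, j)·(n−j)·j! ). -/
/-- **Inductive step of the circuit-count bound (Appendix B)**: for `n ≥ 2`,
if `40320 · s'(j) ≤ 1133233 · j!` for every `j < n`, then
`40320 · s'(n) ≤ 1133233 · (7·(n−1)! + Σ_{j=0}^{n−3} C(n−1,j)·(n−j)·j!)`. -/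
theorem s'_inductive_step (n : ℕ) (hn : 2 ≤ n)
    (ih : ∀ j < n, 40320 * s' j ≤ 1133233 * j.factorial) :
    40320 * s' n ≤
      1133233 * (7 * (n - 1).factorial +
        ∑ j ∈ Finset.range (n - 2), (n - 1).choose j * (n - j) * j.factorial) := by
  obtain ⟨m, rfl⟩ : ∃ m, n = m + 2 := ⟨n - 2, by omega⟩
  simp only [show m + 2 - 1 = m + 1 from rfl, show m + 2 - 2 = m from rfl]
  have hs : s' (m + 2) = 3 * s' (m + 1) + 2 * (m + 1) * s' m +
      ∑ j ∈ Finset.range (m + 1), (m + 1).choose j * (m + 2 - j) * s' j := by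
    rw [s', Fin.sum_univ_eq_sum_range fun j => (m + 1).choose j * (m + 2 - j) * s' j]
  rw [hs]
  rw [Finset.sum_range_succ]
  have key : ∀ j ∈ Finset.range m,
      40320 * ((m + 1).choose j * (m + 2 - j) * s' j) ≤
      1133233 * ((m + 1).choose j * (m + 2 - j) * j.factorial) := by
    intro j hj
    have := ih j (by simp at hj; omega)
    calc 40320 * ((m + 1).choose j * (m + 2 - j) * s' j)
        = (m + 1).choose j * (m + 2 - j) * (40320 * s' j) := by ring
      _ ≤ (m + 1).choose j * (m + 2 - j) * (1133233 * j.factorial) :=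
          Nat.mul_le_mul_left _ this
      _ = 1133233 * ((m + 1).choose j * (m + 2 - j) * j.factorial) := by ring
  have hsum := Finset.sum_le_sum key
  rw [← Finset.mul_sum, ← Finset.mul_sum] at hsum
  have h1 := ih (m + 1) (by omega)
  have h2 := ih m (by omega)
  have hlast : (m + 1).choose m * (m + 2 - m) * s' m = 2 * ((m + 1) * s' m) := by
    rw [Nat.choose_succ_self_right, show m + 2 - m = 2 from by omega]; ring
  rw [hlast]
  have hfac : (m + 1).factorial = (m + 1) * m.factorial := Nat.factorial_succ m
  nlinarith [Nat.mul_le_mul_left (m + 1) h2]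
end

section
/- Nontrivial square roots of unity yield the prime factors: let p and q be distinct odd primes and N = p·q. Suppose x : ZMod N satisfies x² = 1, x ≠ 1, and x ≠ −1. Then { gcd(x.val + 1, N), gcd(x.val − 1, N) } = { p, q }; in particular 1 < gcd(x.val + 1, N) < N and 1 < gcd(x.val − 1, N) < N. -/
lemma gcd_eq_of_aux (p q m : ℕ) (hp : p.Prime) (hq : q.Prime)
    (hpm : p ∣ m) (hqm : ¬ q ∣ m) : Nat.gcd m (p * q) = p := by
  have h1 : p ∣ Nat.gcd m (p * q) := Nat.dvd_gcd hpm (dvd_mul_right p q)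
  have hcop : (Nat.gcd m (p * q)).Coprime q :=
    ((hq.coprime_iff_not_dvd).mpr (fun h => hqm (h.trans (Nat.gcd_dvd_left m _)))).symm
  have h2 : Nat.gcd m (p * q) ∣ p :=
    hcop.dvd_of_dvd_mul_right (Nat.gcd_dvd_right m (p * q))
  exact Nat.dvd_antisymm h2 h1

/-- **Nontrivial square roots of unity yield the prime factors**: for distinct
odd primes `p`, `q` and `N = p·q`, if `x : ZMod N` satisfies `x² = 1`, `x ≠ 1`
and `x ≠ −1`, then `{gcd(x.val + 1, N), gcd(x.val − 1, N)} = {p, q}`; in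
particular both gcds lie strictly between `1` and `N`. -/
theorem nontrivial_sqrt_yields_factors (p q N : ℕ)
    (hp : p.Prime) (hq : q.Prime) (hpq : p ≠ q) (hop : Odd p) (hoq : Odd q)
    (hN : N = p * q) (x : ZMod N)
    (hx2 : x ^ 2 = 1) (hx1 : x ≠ 1) (hxm1 : x ≠ -1) :
    ({Nat.gcd (x.val + 1) N, Nat.gcd (x.val - 1) N} : Set ℕ) = {p, q} ∧
      (1 < Nat.gcd (x.val + 1) N ∧ Nat.gcd (x.val + 1) N < N) ∧
      (1 < Nat.gcd (x.val - 1) N ∧ Nat.gcd (x.val - 1) N < N) := by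
  have hN1 : 1 < N := by
    rw [hN]
    exact one_lt_mul_of_lt_of_le hp.one_lt hq.one_lt.le
  haveI : NeZero N := ⟨by omega⟩
  haveI : Fact (1 < N) := ⟨hN1⟩
  set a := x.val with ha
  have hxa : ((a : ℕ) : ZMod N) = x := ZMod.natCast_zmod_val x
  have ha0 : a ≠ 0 := by
    intro h
    have hx0 : x = 0 := by rw [← hxa, h]; simp
    rw [hx0] at hx2
    simpa using hx2
  have ha1 : 1 ≤ a := Nat.one_le_iff_ne_zero.mpr ha0
  have hdvd : (N : ℤ) ∣ ((a : ℤ) + 1) * ((a : ℤ) - 1) := by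
    have h0 : ((((a : ℤ) ^ 2 - 1 : ℤ)) : ZMod N) = 0 := by
      push_cast
      rw [hxa, hx2]
      ring
    have h1 := (ZMod.intCast_zmod_eq_zero_iff_dvd ((a : ℤ) ^ 2 - 1) N).mp h0
    have hring : ((a : ℤ) + 1) * ((a : ℤ) - 1) = (a : ℤ) ^ 2 - 1 := by ring
    rw [hring]
    exact h1
  have hpZ : Prime (p : ℤ) := Nat.prime_iff_prime_int.mp hp
  have hqZ : Prime (q : ℤ) := Nat.prime_iff_prime_int.mp hq
  have hpN : (p : ℤ) ∣ (N : ℤ) := ⟨(q : ℤ), by rw [hN]; push_cast; ring⟩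
  have hqN : (q : ℤ) ∣ (N : ℤ) := ⟨(p : ℤ), by rw [hN]; push_cast; ring⟩
  have hpcases := hpZ.dvd_or_dvd (hpN.trans hdvd)
  have hqcases := hqZ.dvd_or_dvd (hqN.trans hdvd)
  have notboth : ∀ r : ℕ, r.Prime → Odd r → (r : ℤ) ∣ ((a : ℤ) + 1) →
      (r : ℤ) ∣ ((a : ℤ) - 1) → False := by
    intro r hr hor h1 h2
    have hr2 : (r : ℤ) ∣ 2 := by
      have := dvd_sub h1 h2
      simpa using this
    have hr2' : r ∣ 2 := by exact_mod_cast hr2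
    have := (Nat.prime_dvd_prime_iff_eq hr Nat.prime_two).mp hr2'
    rw [this] at hor
    exact (Nat.not_odd_iff_even.mpr (by decide)) hor
  have hcop : Nat.Coprime p q := (Nat.coprime_primes hp hq).mpr hpq
  have castp1 : ∀ r : ℕ, (r : ℤ) ∣ ((a : ℤ) + 1) ↔ r ∣ (a + 1) := by
    intro r
    rw [show ((a : ℤ) + 1) = ((a + 1 : ℕ) : ℤ) by push_cast; ring]
    exact Int.natCast_dvd_natCast
  have castm1 : ∀ r : ℕ, (r : ℤ) ∣ ((a : ℤ) - 1) ↔ r ∣ (a - 1) := by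
    intro r
    rw [show ((a : ℤ) - 1) = ((a - 1 : ℕ) : ℤ) by
      rw [Nat.cast_sub ha1]; push_cast; ring]
    exact Int.natCast_dvd_natCast
  have hnotNp1 : ¬ ((N : ℤ) ∣ ((a : ℤ) + 1)) := by
    intro h
    apply hxm1
    have h0 : (((a : ℤ) + 1 : ℤ) : ZMod N) = 0 :=
      (ZMod.intCast_zmod_eq_zero_iff_dvd _ N).mpr h
    push_cast at h0
    rw [hxa] at h0
    linear_combination h0
  have hnotNm1 : ¬ ((N : ℤ) ∣ ((a : ℤ) - 1)) := by
    intro h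
    apply hx1
    have h0 : (((a : ℤ) - 1 : ℤ) : ZMod N) = 0 :=
      (ZMod.intCast_zmod_eq_zero_iff_dvd _ N).mpr h
    push_cast at h0
    rw [hxa] at h0
    linear_combination h0
  have hpltN : p < N := by
    rw [hN]
    exact lt_mul_iff_one_lt_right hp.pos |>.mpr hq.one_lt
  have hqltN : q < N := by
    rw [hN]
    exact lt_mul_iff_one_lt_left hq.pos |>.mpr hp.one_lt
  rcases hpcases with hp1 | hpm
  · rcases hqcases with hq1 | hqm
    · -- both divide a+1 : then N ∣ a+1, contradiction
      exfalso
      apply hnotNp1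
      rw [castp1 N, hN]
      exact hcop.mul_dvd_of_dvd_of_dvd ((castp1 p).mp hp1) ((castp1 q).mp hq1)
    · -- p ∣ a+1, q ∣ a-1
      have hqnp1 : ¬ q ∣ (a + 1) := fun h =>
        notboth q hq hoq ((castp1 q).mpr h) hqm
      have hpnm1 : ¬ p ∣ (a - 1) := fun h =>
        notboth p hp hop hp1 ((castm1 p).mpr h)
      have g1 : Nat.gcd (a + 1) N = p := by
        rw [hN]; exact gcd_eq_of_aux p q _ hp hq ((castp1 p).mp hp1) hqnp1
      have g2 : Nat.gcd (a - 1) N = q := by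
        rw [hN, mul_comm]
        exact gcd_eq_of_aux q p _ hq hp ((castm1 q).mp hqm) hpnm1
      rw [g1, g2]
      exact ⟨rfl, ⟨hp.one_lt, hpltN⟩, ⟨hq.one_lt, hqltN⟩⟩
  · rcases hqcases with hq1 | hqm
    · -- q ∣ a+1, p ∣ a-1
      have hpnp1 : ¬ p ∣ (a + 1) := fun h =>
        notboth p hp hop ((castp1 p).mpr h) hpm
      have hqnm1 : ¬ q ∣ (a - 1) := fun h =>
        notboth q hq hoq hq1 ((castm1 q).mpr h)
      have g1 : Nat.gcd (a + 1) N = q := by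
        rw [hN, mul_comm]
        exact gcd_eq_of_aux q p _ hq hp ((castp1 q).mp hq1) hpnp1
      have g2 : Nat.gcd (a - 1) N = p := by
        rw [hN]; exact gcd_eq_of_aux p q _ hp hq ((castm1 p).mp hpm) hqnm1
      rw [g1, g2]
      exact ⟨Set.pair_comm q p, ⟨hq.one_lt, hqltN⟩, ⟨hp.one_lt, hpltN⟩⟩
    · -- both divide a-1
      exfalso
      apply hnotNm1
      rw [castm1 N, hN]
      exact hcop.mul_dvd_of_dvd_of_dvd ((castm1 p).mp hpm) ((castm1 q).mp hqm)
end

section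
/- Even-period factoring condition of Shor's algorithm: let p and q be distinct odd primes, N = p·q, and let a be a unit of ZMod N with multiplicative order r = orderOf a. If r is even and (a : ZMod N)^(r/2) ≠ −1, then both gcd(((a : ZMod N)^(r/2)).val + 1, N) and gcd(((a : ZMod N)^(r/2)).val − 1, N) are nontrivial divisors of N, i.e. each lies strictly between 1 and N. -/
/-- **Even-period factoring condition of Shor's algorithm**: for distinct odd
primes `p`, `q`, `N = p·q`, and a unit `a` of `ZMod N` of even multiplicative
order `r` with `a^(r/2) ≠ −1`, both `gcd((a^(r/2)).val + 1, N)` and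
`gcd((a^(r/2)).val − 1, N)` are nontrivial divisors of `N`, i.e. each lies
strictly between `1` and `N`. -/
theorem shor_even_period (p q N : ℕ)
    (hp : p.Prime) (hq : q.Prime) (hpq : p ≠ q) (hop : Odd p) (hoq : Odd q)
    (hN : N = p * q) (a : (ZMod N)ˣ) (r : ℕ) (hr : r = orderOf a)
    (hreven : Even r) (ha : (a : ZMod N) ^ (r / 2) ≠ -1) :
    (1 < Nat.gcd (((a : ZMod N) ^ (r / 2)).val + 1) N ∧
        Nat.gcd (((a : ZMod N) ^ (r / 2)).val + 1) N < N) ∧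
      (1 < Nat.gcd (((a : ZMod N) ^ (r / 2)).val - 1) N ∧
        Nat.gcd (((a : ZMod N) ^ (r / 2)).val - 1) N < N) := by
  have hNgt : 1 < N := by
    have := hp.two_le; have := hq.two_le; subst hN; nlinarith
  haveI : Fact (1 < N) := ⟨hNgt⟩
  haveI : NeZero N := ⟨by omega⟩
  set x : ZMod N := (a : ZMod N) ^ (r / 2) with hx
  have hr0 : 0 < r := hr ▸ orderOf_pos a
  have hre2 : r % 2 = 0 := Nat.even_iff.mp hreven
  have hordx : orderOf ((a : ZMod N)) = r := by rw [orderOf_units, hr]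
  have hxsq : x * x = 1 := by
    rw [hx, ← pow_add]
    have h2 : r / 2 + r / 2 = r := by
      obtain ⟨k, hk⟩ := hreven; omega
    rw [h2, ← hordx, pow_orderOf_eq_one]
  have hx1 : x ≠ 1 := by
    intro h
    have hdvd : orderOf ((a : ZMod N)) ∣ r / 2 := orderOf_dvd_of_pow_eq_one h
    rw [hordx] at hdvd
    have := Nat.le_of_dvd (by omega) hdvd
    omega
  have hx0 : x ≠ 0 := by
    intro h; rw [h, mul_zero] at hxsq; exact zero_ne_one hxsq
  set v : ℕ := x.val with hv
  have hvlt : v < N := ZMod.val_lt x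
  have hcast : (v : ZMod N) = x := by rw [hv, ZMod.natCast_val, ZMod.cast_id]
  have hv0 : v ≠ 0 := by
    intro h; apply hx0; rw [← hcast, h, Nat.cast_zero]
  have hv1 : v ≠ 1 := by
    intro h; apply hx1; rw [← hcast, h, Nat.cast_one]
  have hvN1 : v ≠ N - 1 := by
    intro h
    apply ha
    rw [← hcast, h]
    have : ((N - 1 : ℕ) : ZMod N) = (N : ZMod N) - 1 := by
      push_cast [Nat.cast_sub (by omega : 1 ≤ N)]; ring
    rw [this, ZMod.natCast_self, zero_sub]
  have hv2 : 2 ≤ v := by omega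
  have hdvd : N ∣ v * v - 1 := by
    have : ((v * v : ℕ) : ZMod N) = ((1 : ℕ) : ZMod N) := by
      push_cast; rw [hcast, hxsq]
    have hmod : v * v ≡ 1 [MOD N] := (ZMod.natCast_eq_natCast_iff _ _ _).mp this
    exact (Nat.modEq_iff_dvd' (by nlinarith)).mp hmod.symm
  have hfact : v * v - 1 = (v + 1) * (v - 1) := by
    have := Nat.sq_sub_sq v 1
    simpa [sq] using this
  rw [hfact] at hdvd
  have hgpos : 0 < Nat.gcd (v + 1) N := Nat.gcd_pos_of_pos_right _ (by omega)
  have hgpos' : 0 < Nat.gcd (v - 1) N := Nat.gcd_pos_of_pos_right _ (by omega)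
  have hplus_lt : Nat.gcd (v + 1) N < N := by
    have h1 : Nat.gcd (v + 1) N ≤ v + 1 := Nat.le_of_dvd (by omega) (Nat.gcd_dvd_left _ _)
    omega
  have hminus_lt : Nat.gcd (v - 1) N < N := by
    have h1 : Nat.gcd (v - 1) N ≤ v - 1 := Nat.le_of_dvd (by omega) (Nat.gcd_dvd_left _ _)
    omega
  have hplus_gt : 1 < Nat.gcd (v + 1) N := by
    rcases Nat.lt_or_ge 1 (Nat.gcd (v + 1) N) with h | h
    · exact h
    · exfalso
      have hco : Nat.Coprime N (v + 1) := Nat.coprime_comm.mp (by omega)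
      have : N ∣ v - 1 := hco.dvd_of_dvd_mul_left hdvd
      have := Nat.le_of_dvd (by omega) this
      omega
  have hminus_gt : 1 < Nat.gcd (v - 1) N := by
    rcases Nat.lt_or_ge 1 (Nat.gcd (v - 1) N) with h | h
    · exact h
    · exfalso
      have hco : Nat.Coprime N (v - 1) := Nat.coprime_comm.mp (by omega)
      have : N ∣ v + 1 := hco.dvd_of_dvd_mul_right hdvd
      have := Nat.le_of_dvd (by omega) this
      omega
  exact ⟨⟨hplus_gt, hplus_lt⟩, ⟨hminus_gt, hminus_lt⟩⟩
end

section
/- Odd-period perfect-square factoring condition: let p and q be distinct odd primes, N = p·q, and let b be a unit of ZMod N. Let r = orderOf (b²) be the multiplicative order of the perfect-square base a = b². If r is odd and (b : ZMod N)^r ≠ 1 and (b : ZMod N)^r ≠ −1, then both gcd(((b : ZMod N)^r).val + 1, N) and gcd(((b : ZMod N)^r).val − 1, N) are nontrivial divisors of N, i.e. each lies strictly between 1 and N. -/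
/-- **Odd-period perfect-square factoring condition**: for distinct odd primes
`p`, `q`, `N = p·q`, and a unit `b` of `ZMod N` such that the perfect-square
base `a = b²` has odd multiplicative order `r`, if `b^r ≠ 1` and `b^r ≠ −1`
then both `gcd((b^r).val + 1, N)` and `gcd((b^r).val − 1, N)` are nontrivial
divisors of `N`, i.e. each lies strictly between `1` and `N`. -/
theorem shor_odd_period_perfect_square (p q N : ℕ)
    (hp : p.Prime) (hq : q.Prime) (hpq : p ≠ q) (hop : Odd p) (hoq : Odd q)
    (hN : N = p * q) (b : (ZMod N)ˣ) (r : ℕ) (hr : r = orderOf (b ^ 2))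
    (hrodd : Odd r) (hb1 : (b : ZMod N) ^ r ≠ 1) (hbm1 : (b : ZMod N) ^ r ≠ -1) :
    (1 < Nat.gcd (((b : ZMod N) ^ r).val + 1) N ∧
        Nat.gcd (((b : ZMod N) ^ r).val + 1) N < N) ∧
      (1 < Nat.gcd (((b : ZMod N) ^ r).val - 1) N ∧
        Nat.gcd (((b : ZMod N) ^ r).val - 1) N < N) := by
  have hN1 : 1 < N := by
    rw [hN]; exact Nat.one_lt_mul_iff.mpr ⟨hp.pos, hq.pos, Or.inl hp.one_lt⟩
  haveI : NeZero N := ⟨by omega⟩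
  haveI : Fact (1 < N) := ⟨hN1⟩
  set x : ZMod N := (b : ZMod N) ^ r with hxdef
  have hx2 : x ^ 2 = 1 := by
    have h1 : (b ^ 2) ^ r = 1 := by rw [hr]; exact pow_orderOf_eq_one _
    have h2 := congrArg (Units.val : (ZMod N)ˣ → ZMod N) h1
    simp only [Units.val_pow_eq_pow_val, Units.val_one] at h2
    rw [hxdef, ← pow_mul, mul_comm, pow_mul]
    exact h2
  have hvlt : x.val < N := ZMod.val_lt x
  have hvx : ((x.val : ℕ) : ZMod N) = x := ZMod.natCast_rightInverse x
  have hxne : x ≠ 0 := by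
    have : IsUnit x := by
      rw [hxdef]; exact b.isUnit.pow r
    exact this.ne_zero
  have hv0 : x.val ≠ 0 := by
    intro h
    apply hxne
    rw [← hvx, h, Nat.cast_zero]
  obtain ⟨w, hw⟩ : ∃ w, x.val = w + 1 := ⟨x.val - 1, by omega⟩
  rw [hw] at hvlt hvx ⊢
  -- N ∣ w * (w + 2)
  have hdvd : N ∣ w * (w + 2) := by
    have hmod : (w + 1) ^ 2 ≡ 1 [MOD N] := by
      have : (((w + 1) ^ 2 : ℕ) : ZMod N) = ((1 : ℕ) : ZMod N) := by
        rw [Nat.cast_pow, hvx, hx2, Nat.cast_one]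
      exact (ZMod.natCast_eq_natCast_iff _ _ _).mp this
    have hd : N ∣ (w + 1) ^ 2 - 1 :=
      (Nat.modEq_iff_dvd' (Nat.one_le_pow _ _ (by omega))).mp hmod.symm
    have heq : (w + 1) ^ 2 - 1 = w * (w + 2) := by
      have : (w + 1) ^ 2 = w * (w + 2) + 1 := by ring
      omega
    rwa [heq] at hd
  have hw1 : w ≠ 0 := by
    intro h
    apply hb1
    rw [← hvx, h]
    norm_num
  have hwN : w + 2 ≠ N := by
    intro h
    apply hbm1
    rw [← hvx]
    have : (w + 1 : ℕ) = N - 1 := by omega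
    rw [this, Nat.cast_sub (by omega), ZMod.natCast_self, Nat.cast_one, zero_sub]
  have hg1 : Nat.gcd (w + 1 + 1) N ≠ 1 := by
    intro h
    have hco : Nat.Coprime N (w + 2) := by
      have : w + 1 + 1 = w + 2 := by omega
      rw [this] at h
      exact (Nat.coprime_comm.mp h)
    have : N ∣ w := hco.dvd_of_dvd_mul_right hdvd
    have := Nat.le_of_dvd (by omega) this
    omega
  have hg2 : Nat.gcd (w + 1 + 1) N ≠ N := by
    intro h
    have : N ∣ w + 1 + 1 := h ▸ Nat.gcd_dvd_left _ _
    have := Nat.le_of_dvd (by omega) this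
    have h2N : w + 1 + 1 = N := by omega
    exact hwN (by omega)
  have hg3 : Nat.gcd (w + 1 - 1) N ≠ 1 := by
    intro h
    have hco : Nat.Coprime N w := by
      have : w + 1 - 1 = w := by omega
      rw [this] at h
      exact Nat.coprime_comm.mp h
    have hd2 : N ∣ w + 2 := hco.dvd_of_dvd_mul_left hdvd
    have := Nat.le_of_dvd (by omega) hd2
    omega
  have hg4 : Nat.gcd (w + 1 - 1) N ≠ N := by
    intro h
    have : N ∣ w + 1 - 1 := h ▸ Nat.gcd_dvd_left _ _
    have : N ∣ w := by simpa using this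
    have := Nat.le_of_dvd (by omega) this
    omega
  have hp1 : 0 < Nat.gcd (w + 1 + 1) N := Nat.gcd_pos_of_pos_right _ (by omega)
  have hp2 : 0 < Nat.gcd (w + 1 - 1) N := Nat.gcd_pos_of_pos_right _ (by omega)
  have hle1 : Nat.gcd (w + 1 + 1) N ≤ N := Nat.le_of_dvd (by omega) (Nat.gcd_dvd_right _ _)
  have hle2 : Nat.gcd (w + 1 - 1) N ≤ N := Nat.le_of_dvd (by omega) (Nat.gcd_dvd_right _ _)
  exact ⟨⟨by omega, by omega⟩, ⟨by omega, by omega⟩⟩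
end
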